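/- Let (A, ↖, ↙, ↗, ↘, α, β) be a BiHom-alternative quadri-algebra. Then (A, ≺, ≻, α, β) with x≺y = x↖y + x↙y and x≻y = x↗y + x↘y is a BiHom-pre-alternative algebra (the horizontal structure). -/
import Mathlib


variable {K : Type*} [Field K] {A : Type*} [AddCommGroup A] [Module K A]
  {V : Type*} [AddCommGroup V] [Module K V]

/-- The right BiHom-associator of a pair of bilinear operations `p = ≺`, `s = ≻`. -/
def preAsR (p s : A →ₗ[K] A →ₗ[K] A) (α β : A →ₗ[K] A) (x y z : A) : A :=
  p (p x y) (β z) - p (α x) (p y z + s y z)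

/-- The middle BiHom-associator. -/
def preAsM (p s : A →ₗ[K] A →ₗ[K] A) (α β : A →ₗ[K] A) (x y z : A) : A :=
  p (s x y) (β z) - s (α x) (p y z)

/-- The left BiHom-associator. -/
def preAsL (p s : A →ₗ[K] A →ₗ[K] A) (α β : A →ₗ[K] A) (x y z : A) : A :=
  s (p x y + s x y) (β z) - s (α x) (s y z)

/-- A BiHom-pre-alternative algebra structure on `A`, with `p = ≺` and `s = ≻`. -/
structure IsBiHomPreAlternative (p s : A →ₗ[K] A →ₗ[K] A) (α β : A →ₗ[K] A) : Prop where
  hαβ : ∀ x, α (β x) = β (α x)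
  hαp : ∀ x y, α (p x y) = p (α x) (α y)
  hαs : ∀ x y, α (s x y) = s (α x) (α y)
  hβp : ∀ x y, β (p x y) = p (β x) (β y)
  hβs : ∀ x y, β (s x y) = s (β x) (β y)
  hr : ∀ x y z, preAsR p s α β x (β y) (α z) + preAsR p s α β x (β z) (α y) = 0
  hl : ∀ x y z, preAsL p s α β (β x) (α y) z + preAsL p s α β (β y) (α x) z = 0
  hmr : ∀ x y z, preAsM p s α β (β x) (α y) z + preAsR p s α β (β y) (α x) z = 0
  hml : ∀ x y z, preAsM p s α β x (β y) (α z) + preAsL p s α β x (β z) (α y) = 0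
set_option linter.unusedVariables false

/-- Quadri-associator `{x,y,z}^r = (x↖y)↖β(z) − α(x)↖(y∗z)`. -/
def qAsR (nw sw ne se : A →ₗ[K] A →ₗ[K] A) (α β : A →ₗ[K] A) (x y z : A) : A :=
  nw (nw x y) (β z) - nw (α x) (nw y z + sw y z + ne y z + se y z)

/-- Quadri-associator `{x,y,z}^l = (x∗y)↘β(z) − α(x)↘(y↘z)`. -/
def qAsL (nw sw ne se : A →ₗ[K] A →ₗ[K] A) (α β : A →ₗ[K] A) (x y z : A) : A :=
  se (nw x y + sw x y + ne x y + se x y) (β z) - se (α x) (se y z)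

/-- Quadri-associator `{x,y,z}^{ne} = (x∧y)↗β(z) − α(x)↗(y≻z)`. -/
def qAsNE (nw sw ne se : A →ₗ[K] A →ₗ[K] A) (α β : A →ₗ[K] A) (x y z : A) : A :=
  ne (ne x y + nw x y) (β z) - ne (α x) (ne y z + se y z)

/-- Quadri-associator `{x,y,z}^{sw} = (x≺y)↙β(z) − α(x)↙(y∨z)`. -/
def qAsSW (nw sw ne se : A →ₗ[K] A →ₗ[K] A) (α β : A →ₗ[K] A) (x y z : A) : A :=
  sw (nw x y + sw x y) (β z) - sw (α x) (se y z + sw y z)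

/-- Quadri-associator `{x,y,z}^n = (x↗y)↖β(z) − α(x)↗(y≺z)`. -/
def qAsN (nw sw ne se : A →ₗ[K] A →ₗ[K] A) (α β : A →ₗ[K] A) (x y z : A) : A :=
  nw (ne x y) (β z) - ne (α x) (nw y z + sw y z)

/-- Quadri-associator `{x,y,z}^w = (x↙y)↖β(z) − α(x)↙(y∧z)`. -/
def qAsW (nw sw ne se : A →ₗ[K] A →ₗ[K] A) (α β : A →ₗ[K] A) (x y z : A) : A :=
  nw (sw x y) (β z) - sw (α x) (ne y z + nw y z)

/-- Quadri-associator `{x,y,z}^s = (x≻y)↙β(z) − α(x)↘(y↙z)`. -/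
def qAsS (nw sw ne se : A →ₗ[K] A →ₗ[K] A) (α β : A →ₗ[K] A) (x y z : A) : A :=
  sw (ne x y + se x y) (β z) - se (α x) (sw y z)

/-- Quadri-associator `{x,y,z}^e = (x∨y)↗β(z) − α(x)↘(y↗z)`. -/
def qAsE (nw sw ne se : A →ₗ[K] A →ₗ[K] A) (α β : A →ₗ[K] A) (x y z : A) : A :=
  ne (se x y + sw x y) (β z) - se (α x) (ne y z)

/-- Quadri-associator `{x,y,z}^m = (x↘y)↖β(z) − α(x)↘(y↖z)`. -/
def qAsM (nw sw ne se : A →ₗ[K] A →ₗ[K] A) (α β : A →ₗ[K] A) (x y z : A) : A :=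
  nw (se x y) (β z) - se (α x) (nw y z)

/-- A BiHom-alternative quadri-algebra structure on `A`,
with operations `nw = ↖`, `sw = ↙`, `ne = ↗`, `se = ↘`. -/
structure IsBiHomAltQuadri (nw sw ne se : A →ₗ[K] A →ₗ[K] A) (α β : A →ₗ[K] A) : Prop where
  hαβ : ∀ x, α (β x) = β (α x)
  hαnw : ∀ x y, α (nw x y) = nw (α x) (α y)
  hαsw : ∀ x y, α (sw x y) = sw (α x) (α y)
  hαne : ∀ x y, α (ne x y) = ne (α x) (α y)
  hαse : ∀ x y, α (se x y) = se (α x) (α y)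
  hβnw : ∀ x y, β (nw x y) = nw (β x) (β y)
  hβsw : ∀ x y, β (sw x y) = sw (β x) (β y)
  hβne : ∀ x y, β (ne x y) = ne (β x) (β y)
  hβse : ∀ x y, β (se x y) = se (β x) (β y)
  ax1 : ∀ x y z, qAsR nw sw ne se α β (β x) (α y) z + qAsM nw sw ne se α β (β y) (α x) z = 0
  ax2 : ∀ x y z, qAsN nw sw ne se α β (β x) (α y) z + qAsW nw sw ne se α β (β y) (α x) z = 0
  ax3 : ∀ x y z, qAsNE nw sw ne se α β (β x) (α y) z + qAsE nw sw ne se α β (β y) (α x) z = 0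
  ax4 : ∀ x y z, qAsSW nw sw ne se α β (β x) (α y) z + qAsS nw sw ne se α β (β y) (α x) z = 0
  ax5 : ∀ x y z, qAsL nw sw ne se α β (β x) (α y) z + qAsL nw sw ne se α β (β y) (α x) z = 0
  ax6 : ∀ x y z, qAsR nw sw ne se α β x (β y) (α z) + qAsR nw sw ne se α β x (β z) (α y) = 0
  ax7 : ∀ x y z, qAsN nw sw ne se α β x (β y) (α z) + qAsNE nw sw ne se α β x (β z) (α y) = 0
  ax8 : ∀ x y z, qAsW nw sw ne se α β x (β y) (α z) + qAsSW nw sw ne se α β x (β z) (α y) = 0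
  ax9 : ∀ x y z, qAsM nw sw ne se α β x (β y) (α z) + qAsL nw sw ne se α β x (β z) (α y) = 0
  ax10 : ∀ x y z, qAsS nw sw ne se α β x (β y) (α z) + qAsE nw sw ne se α β x (β z) (α y) = 0

/-- The horizontal structure `(A, ≺ = ↖+↙, ≻ = ↗+↘, α, β)` of a
BiHom-alternative quadri-algebra is a BiHom-pre-alternative algebra. -/
theorem quadri_horizontal_preAlternative
    (nw sw ne se : A →ₗ[K] A →ₗ[K] A) (α β : A →ₗ[K] A)
    (hq : IsBiHomAltQuadri nw sw ne se α β) :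
    IsBiHomPreAlternative (nw + sw) (ne + se) α β := by

  have e : ∀ a b : A →ₗ[K] A →ₗ[K] A, ∀ x y : A, (a + b) x y = a x y + b x y := by
    intro a b x y; simp
  constructor
  · exact hq.hαβ
  · intro x y; simp [hq.hαnw, hq.hαsw]
  · intro x y; simp [hq.hαne, hq.hαse]
  · intro x y; simp [hq.hβnw, hq.hβsw]
  · intro x y; simp [hq.hβne, hq.hβse]
  · intro x y z
    have h1 := hq.ax6 x y z
    have h2 := hq.ax8 x y z
    have h3 := hq.ax8 x z y
    simp only [preAsR, qAsR, qAsW, qAsSW, e, map_add, LinearMap.add_apply] at h1 h2 h3 ⊢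
    linear_combination (norm := abel) h1 + h2 + h3
  · intro x y z
    have h1 := hq.ax5 x y z
    have h2 := hq.ax3 x y z
    have h3 := hq.ax3 y x z
    simp only [preAsL, qAsL, qAsNE, qAsE, e, map_add, LinearMap.add_apply] at h1 h2 h3 ⊢
    linear_combination (norm := abel) h1 + h2 + h3
  · intro x y z
    have h1 := hq.ax2 x y z
    have h2 := hq.ax1 y x z
    have h3 := hq.ax4 y x z
    simp only [preAsM, preAsR, qAsN, qAsM, qAsS, qAsR, qAsW, qAsSW, e, map_add,
      LinearMap.add_apply] at h1 h2 h3 ⊢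
    linear_combination (norm := abel) h1 + h2 + h3
  · intro x y z
    have h1 := hq.ax7 x y z
    have h2 := hq.ax9 x y z
    have h3 := hq.ax10 x y z
    simp only [preAsM, preAsL, qAsN, qAsM, qAsS, qAsL, qAsNE, qAsE, e, map_add,
      LinearMap.add_apply] at h1 h2 h3 ⊢
    linear_combination (norm := abel) h1 + h2 + h3
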